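/- Let μ and ν be Borel probability measures on ℝ with cumulative distribution functions F and G, where F is continuous, and let G⁻ be the quantile function of G. Then the pushforward measure π of μ under the map x ↦ (x, G⁻(F(x))) satisfies, for all real x and y, π( (−∞,x] × (−∞,y] ) = min( F(x), G(y) ); that is, the deterministic transport plan induced by the transport map T = G⁻∘F has joint cumulative distribution function H(x,y) = min(F(x), G(y)). -/

import Mathlib

/-!
Since `F` is continuous, `F` pushes `μ` forward to the uniform distribution on `(0,1)`
(probability integral transform). Hence `F x ∈ (0,1)` for `μ`-a.e. `x`, and on `(0,1)` the
quantile function satisfies the Galois property `G⁻ t ≤ y ↔ t ≤ G y`. So, up to a null set,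
`{z | z ≤ x ∧ G⁻ (F z) ≤ y} = {z | z ≤ x ∧ F z ≤ G y}`, which is `(-∞, x]` when `F x ≤ G y`
and `{F ≤ G y}`, of mass `G y`, otherwise.
-/

open MeasureTheory Set Filter ProbabilityTheory

/-- The cumulative distribution function of a measure on `ℝ`: `F(x) = μ((−∞,x])`. -/
noncomputable def cdfOf (μ : Measure ℝ) (x : ℝ) : ℝ := (μ (Set.Iic x)).toReal

/-- The quantile function (generalized inverse of the cdf):
`G⁻(t) = inf {x : G(x) ≥ t}`. -/
noncomputable def quantileOf (μ : Measure ℝ) (t : ℝ) : ℝ :=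
  sInf {x : ℝ | t ≤ cdfOf μ x}

theorem Monotone.exists_eq_and_preimage_Iic_eq_Iic {α β : Type*}
    [ConditionallyCompleteLinearOrder α] [TopologicalSpace α] [OrderTopology α]
    [DenselyOrdered α] [LinearOrder β] [TopologicalSpace β] [OrderClosedTopology β]
    {f : α → β} (hmono : Monotone f) (hf : Continuous f) {t : β}
    (hlow : ∃ z, f z ≤ t) (hup : ∃ w, t < f w) : ∃ a, f a = t ∧ f ⁻¹' Iic t = Iic a := by
  obtain ⟨w, hw⟩ := hup
  set S := f ⁻¹' Iic t
  have hbdd : BddAbove S := ⟨w, fun z hz => (hmono.reflect_lt (lt_of_le_of_lt hz hw)).le⟩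
  have hmem : sSup S ∈ S := (isClosed_Iic.preimage hf).csSup_mem hlow hbdd
  refine ⟨sSup S, le_antisymm hmem (not_lt.1 fun hlt => ?_), ?_⟩
  · obtain ⟨c, hc, hfc⟩ := intermediate_value_Ioo (hmono.reflect_lt (lt_of_le_of_lt hmem hw)).le
      hf.continuousOn ⟨hlt, hw⟩
    exact (le_csSup hbdd hfc.le).not_gt hc.1
  · ext z
    exact ⟨fun hz => le_csSup hbdd hz, fun hz => (hmono hz).trans hmem⟩

section cdfOf

variable (μ : Measure ℝ)

lemma cdfOf_nonneg (x : ℝ) : 0 ≤ cdfOf μ x := ENNReal.toReal_nonneg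

variable [IsProbabilityMeasure μ]

lemma cdfOf_eq_cdf : cdfOf μ = cdf μ := by
  funext x
  rw [cdfOf, cdf_eq_real, measureReal_def]

lemma monotone_cdfOf : Monotone (cdfOf μ) := cdfOf_eq_cdf μ ▸ monotone_cdf μ

lemma cdfOf_le_one (x : ℝ) : cdfOf μ x ≤ 1 := cdfOf_eq_cdf μ ▸ cdf_le_one μ x

lemma measure_Iic_eq_ofReal_cdfOf (x : ℝ) : μ (Iic x) = ENNReal.ofReal (cdfOf μ x) := by
  rw [cdfOf_eq_cdf, ofReal_cdf]

lemma quantileOf_le_iff {t : ℝ} (ht : t ∈ Ioo 0 1) (y : ℝ) :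
    quantileOf μ t ≤ y ↔ t ≤ cdfOf μ y := by
  rw [quantileOf, cdfOf_eq_cdf]
  set S := {x | t ≤ cdf μ x}
  have hne : S.Nonempty :=
    ((tendsto_cdf_atTop μ).eventually_const_lt ht.2).exists.imp fun _ h => h.le
  have hbdd : BddBelow S := by
    obtain ⟨w, hw⟩ := ((tendsto_cdf_atBot μ).eventually_lt_const ht.1).exists
    exact ⟨w, fun x hx => le_of_not_gt fun hxw => (hx.trans (monotone_cdf μ hxw.le)).not_gt hw⟩
  -- `S` contains its infimum because the cdf is right-continuous.
  have hmem : sInf S ∈ S := by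
    refine ge_of_tendsto (((cdf μ).right_continuous _).mono_left
      (nhdsWithin_mono _ Ioi_subset_Ici_self)) ?_
    filter_upwards [self_mem_nhdsWithin] with z hz
    obtain ⟨s, hs, hsz⟩ := (csInf_lt_iff hbdd hne).1 hz
    exact hs.trans (monotone_cdf μ hsz.le)
  exact ⟨fun h => hmem.trans (monotone_cdf μ h), fun h => csInf_le hbdd h⟩

lemma monotoneOn_quantileOf : MonotoneOn (quantileOf μ) (Ioo 0 1) := fun _ hs _ ht hst =>
  (quantileOf_le_iff μ hs _).2 (hst.trans ((quantileOf_le_iff μ ht _).1 le_rfl))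

variable {μ}

lemma measure_cdfOf_preimage_Iic (hF : Continuous (cdfOf μ)) {t : ℝ} (ht : t ∈ Ico 0 1) :
    μ (cdfOf μ ⁻¹' Iic t) = ENNReal.ofReal t := by
  by_cases hlow : ∃ z, cdfOf μ z ≤ t
  · have hup : ∃ w, t < cdfOf μ w := by
      rw [cdfOf_eq_cdf]
      exact ((tendsto_cdf_atTop μ).eventually_const_lt ht.2).exists
    obtain ⟨a, hFa, hpre⟩ := (monotone_cdfOf μ).exists_eq_and_preimage_Iic_eq_Iic hF hlow hup
    rw [hpre, measure_Iic_eq_ofReal_cdfOf, hFa]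
  · push Not at hlow
    have ht0 : t = 0 := by
      refine le_antisymm (ge_of_tendsto' (tendsto_cdf_atBot μ) fun z => ?_) ht.1
      exact cdfOf_eq_cdf μ ▸ (hlow z).le
    have hpre : cdfOf μ ⁻¹' Iic t = ∅ := eq_empty_of_forall_notMem fun z hz => (hlow z).not_ge hz
    rw [hpre, ht0, measure_empty, ENNReal.ofReal_zero]

theorem map_cdfOf (hF : Continuous (cdfOf μ)) : μ.map (cdfOf μ) = volume.restrict (Ioo 0 1) := by
  refine Measure.ext_of_Iic _ _ fun t => ?_
  rw [Measure.map_apply hF.measurable measurableSet_Iic, Measure.restrict_apply measurableSet_Iic]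
  rcases lt_or_ge t 0 with ht0 | ht0
  · have hpre : cdfOf μ ⁻¹' Iic t = ∅ :=
      eq_empty_of_forall_notMem fun z hz => (cdfOf_nonneg μ z).not_gt (lt_of_le_of_lt hz ht0)
    have hinter : Iic t ∩ Ioo 0 1 = ∅ :=
      eq_empty_of_forall_notMem fun z hz => hz.2.1.not_ge (hz.1.trans ht0.le)
    simp [hpre, hinter]
  rcases lt_or_ge t 1 with ht1 | ht1
  · have hinter : Iic t ∩ Ioo 0 1 = Ioc 0 t := by
      ext z
      simp only [mem_inter_iff, mem_Iic, mem_Ioo, mem_Ioc]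
      constructor
      · exact fun h => ⟨h.2.1, h.1⟩
      · exact fun h => ⟨h.2, h.1, lt_of_le_of_lt h.2 ht1⟩
    rw [measure_cdfOf_preimage_Iic hF ⟨ht0, ht1⟩, hinter, Real.volume_Ioc, sub_zero]
  · have hpre : cdfOf μ ⁻¹' Iic t = univ :=
      eq_univ_of_forall fun z => (cdfOf_le_one μ z).trans ht1
    rw [hpre, inter_eq_right.2 fun z hz => hz.2.le.trans ht1, Real.volume_Ioo]
    simp

lemma ae_cdfOf_mem_Ioo (hF : Continuous (cdfOf μ)) : ∀ᵐ z ∂μ, cdfOf μ z ∈ Ioo 0 1 :=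
  ae_of_ae_map hF.measurable.aemeasurable (map_cdfOf hF ▸ ae_restrict_mem measurableSet_Ioo)

lemma measure_Iic_inter_cdfOf_preimage_Iic (hF : Continuous (cdfOf μ)) (x : ℝ) {t : ℝ}
    (ht : t ∈ Icc 0 1) : (μ (Iic x ∩ cdfOf μ ⁻¹' Iic t)).toReal = min (cdfOf μ x) t := by
  rcases le_or_gt (cdfOf μ x) t with hxt | htx
  · have hsub : Iic x ⊆ cdfOf μ ⁻¹' Iic t := fun z hz => (monotone_cdfOf μ hz).trans hxt
    rw [inter_eq_left.2 hsub, min_eq_left hxt]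
    rfl
  · have hsub : cdfOf μ ⁻¹' Iic t ⊆ Iic x := fun z hz =>
      ((monotone_cdfOf μ).reflect_lt (lt_of_le_of_lt hz htx)).le
    rw [inter_eq_right.2 hsub, min_eq_right htx.le,
      measure_cdfOf_preimage_Iic hF ⟨ht.1, htx.trans_le (cdfOf_le_one μ x)⟩,
      ENNReal.toReal_ofReal ht.1]

end cdfOf

/-- if the cdf `F` of `μ` is continuous, the deterministic transport plan
induced by the transport map `T = G⁻ ∘ F`, i.e. the pushforward of `μ` under
`x ↦ (x, G⁻(F x))`, has joint cumulative distribution function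
`H(x,y) = min(F(x), G(y))`. -/
theorem deterministic_plan_cdf_of_continuous_cdf
    (μ ν : Measure ℝ) [IsProbabilityMeasure μ] [IsProbabilityMeasure ν]
    (hF : Continuous (cdfOf μ)) :
    ∀ x y : ℝ,
      ((μ.map (fun x => (x, quantileOf ν (cdfOf μ x))))
        (Set.Iic x ×ˢ Set.Iic y)).toReal = min (cdfOf μ x) (cdfOf ν y) := by
  intro x y
  have hT : AEMeasurable (fun z => quantileOf ν (cdfOf μ z)) μ := by
    have hQ : AEMeasurable (quantileOf ν) (μ.map (cdfOf μ)) := by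
      rw [map_cdfOf hF]
      exact aemeasurable_restrict_of_monotoneOn measurableSet_Ioo (monotoneOn_quantileOf ν)
    exact hQ.comp_aemeasurable hF.measurable.aemeasurable
  rw [Measure.map_apply_of_aemeasurable (aemeasurable_id'.prodMk hT)
    (measurableSet_Iic.prod measurableSet_Iic)]
  have hpre : (fun z => (z, quantileOf ν (cdfOf μ z))) ⁻¹' (Iic x ×ˢ Iic y)
      =ᵐ[μ] (Iic x ∩ cdfOf μ ⁻¹' Iic (cdfOf ν y) : Set ℝ) := by
    refine eventuallyEq_set.2 ?_
    filter_upwards [ae_cdfOf_mem_Ioo hF] with z hz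
    exact Iff.rfl.and (quantileOf_le_iff ν hz _)
  rw [measure_congr hpre,
    measure_Iic_inter_cdfOf_preimage_Iic hF x ⟨cdfOf_nonneg ν y, cdfOf_le_one ν y⟩]
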